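/- Fix n ≥ 1, an integer k with 1 ≤ k < n, θ ∈ ℝ, σ > 0, ξ > 0, η > 0 and a scaling factor α > 0. Let Z be a real random variable with Gaussian law N(θ, σ²ξ²/n), let S be independent of Z with density ρ_{n−k}, and let θ̃_S = sign(Z)(|Z| − σSξη)_+ be the feasible soft-thresholding estimator, where (·)_+ = max(·, 0). Then for every x ∈ ℝ, P(σ^{−1}α(θ̃_S − θ) ≤ x) = (∫_0^∞ Φ(n^{1/2} x/(α ξ) + n^{1/2} s η) ρ_{n−k}(s) ds)·1(x/α + θ/σ ≥ 0) + (∫_0^∞ Φ(n^{1/2} x/(α ξ) − n^{1/2} s η) ρ_{n−k}(s) ds)·1(x/α + θ/σ < 0). -/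

import Mathlib

open MeasureTheory ProbabilityTheory Filter Set

/-- Standard normal cdf. -/
noncomputable def Phi (x : ℝ) : ℝ :=
  ∫ t in Iic x, (Real.sqrt (2 * Real.pi))⁻¹ * Real.exp (-t ^ 2 / 2)

/-- Standard normal pdf. -/
noncomputable def stdPhi (t : ℝ) : ℝ :=
  (Real.sqrt (2 * Real.pi))⁻¹ * Real.exp (-t ^ 2 / 2)

/-- Extension of `Phi` to the extended reals, with `PhiE ⊤ = 1` and `PhiE ⊥ = 0`. -/
noncomputable def PhiE (z : EReal) : ℝ :=
  if z = ⊤ then 1 else if z = ⊥ then 0 else Phi z.toReal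

/-- Density of `m^{-1/2}` times the square root of a chi-square with `m` degrees of freedom. -/
noncomputable def rho (m : ℕ) (s : ℝ) : ℝ :=
  if 0 < s then
    (2 : ℝ) ^ ((1 : ℝ) - (m : ℝ) / 2) * (Real.Gamma ((m : ℝ) / 2))⁻¹ * Real.sqrt m *
      ((m : ℝ) * s ^ 2) ^ (((m : ℝ) - 1) / 2) * Real.exp (-(m : ℝ) * s ^ 2 / 2)
  else 0

/-- Joint law of the least-squares coordinate `Z ~ N(θ, σ²ξ²/n)` and the independent
variance-estimator ratio `S` with density `rho m`. -/
noncomputable def jointMeas (n m : ℕ) (ξ θ σ : ℝ) : Measure (ℝ × ℝ) :=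
  (gaussianReal θ (Real.toNNReal (σ ^ 2 * ξ ^ 2 / n))).prod
    (volume.withDensity fun s => ENNReal.ofReal (rho m s))

/-- Feasible hard-thresholding estimator `Z · 1(|Z| > σSξη)`. -/
noncomputable def hardF (σ ξ η : ℝ) (p : ℝ × ℝ) : ℝ :=
  if σ * p.2 * ξ * η < |p.1| then p.1 else 0

/-- Feasible soft-thresholding estimator `sign(Z)(|Z| − σSξη)₊`. -/
noncomputable def softF (σ ξ η : ℝ) (p : ℝ × ℝ) : ℝ :=
  Real.sign p.1 * max (|p.1| - σ * p.2 * ξ * η) 0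

/-- Feasible adaptive soft-thresholding estimator `Z(1 − σ²S²ξ²η²/Z²)₊`. -/
noncomputable def adaptF (σ ξ η : ℝ) (p : ℝ × ℝ) : ℝ :=
  if p.1 = 0 then 0 else p.1 * max (1 - (σ * p.2 * ξ * η) ^ 2 / p.1 ^ 2) 0

/-! Since `S ≥ 0`, soft thresholding is monotone in `Z` and, for fixed `S = s`, the event
`σ⁻¹α(θ̃_S − θ) ≤ x` is the half-line `Z ≤ θ + σx/α ± σsξη`, with the sign `+` exactly when the
level `θ + σx/α` is nonnegative. Conditioning on `S` (Tonelli on the product measure) and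
standardizing the Gaussian `Z` turns each slice probability into a value of `Φ`. -/

open scoped NNReal ENNReal

lemma Real.measurable_sign : Measurable Real.sign :=
  Measurable.ite measurableSet_Iio measurable_const
    (Measurable.ite measurableSet_Ioi measurable_const measurable_const)

lemma measurable_rho (m : ℕ) : Measurable (rho m) :=
  Measurable.ite measurableSet_Ioi (by fun_prop) measurable_const

lemma rho_nonneg (m : ℕ) (s : ℝ) : 0 ≤ rho m s := by
  unfold rho
  split_ifs <;> positivity

lemma rho_of_nonpos (m : ℕ) {s : ℝ} (hs : s ≤ 0) : rho m s = 0 :=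
  if_neg hs.not_gt

lemma Phi_eq_cdf_gaussianReal : Phi = cdf (gaussianReal 0 1) := by
  ext u
  rw [cdf_eq_real, measureReal_def, gaussianReal_apply_eq_integral 0 one_ne_zero,
    ENNReal.toReal_ofReal (setIntegral_nonneg measurableSet_Iic
      fun t _ => gaussianPDFReal_nonneg 0 1 t)]
  refine setIntegral_congr_fun measurableSet_Iic fun t _ => ?_
  simp [gaussianPDFReal]

lemma gaussianReal_eq_map_const_add_mul (θ : ℝ) (v : ℝ≥0) :
    gaussianReal θ v = (gaussianReal 0 1).map (fun t => θ + Real.sqrt v * t) := by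
  rw [show (fun t => θ + Real.sqrt v * t) = (θ + ·) ∘ (Real.sqrt v * ·) from rfl,
    ← Measure.map_map (by fun_prop) (by fun_prop), gaussianReal_map_const_mul,
    gaussianReal_map_const_add]
  congr 1
  · ring
  · ext; simp

lemma cdf_gaussianReal (θ : ℝ) {v : ℝ≥0} (hv : v ≠ 0) (a : ℝ) :
    cdf (gaussianReal θ v) a = Phi ((a - θ) / Real.sqrt v) := by
  have hsd : 0 < Real.sqrt v := Real.sqrt_pos.2 (by positivity)
  have hpre : (fun t => θ + Real.sqrt v * t) ⁻¹' Iic a = Iic ((a - θ) / Real.sqrt v) := by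
    ext t
    simp only [mem_preimage, mem_Iic, le_div_iff₀ hsd]
    constructor <;> intro h <;> linarith
  rw [Phi_eq_cdf_gaussianReal, cdf_eq_real, cdf_eq_real, gaussianReal_eq_map_const_add_mul,
    map_measureReal_apply (by fun_prop) measurableSet_Iic, hpre]

lemma measureReal_prod_withDensity {α β : Type*} [MeasurableSpace α] [MeasurableSpace β]
    (μ : Measure α) [IsFiniteMeasure μ] (ν : Measure β) [SFinite ν] {f : β → ℝ}
    (hf : Measurable f) (hf_nonneg : ∀ s, 0 ≤ f s) {A : Set (α × β)} (hA : MeasurableSet A) :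
    (μ.prod (ν.withDensity fun s => ENNReal.ofReal (f s)) A).toReal =
      ∫ s, μ.real ((fun z => (z, s)) ⁻¹' A) * f s ∂ν := by
  rw [Measure.prod_apply_symm hA, lintegral_withDensity_eq_lintegral_mul _ hf.ennreal_ofReal
      (measurable_measure_prodMk_right hA),
    integral_eq_lintegral_of_nonneg_ae
      (ae_of_all _ fun s => mul_nonneg measureReal_nonneg (hf_nonneg s))
      ((measurable_measure_prodMk_right hA).ennreal_toReal.mul hf).aestronglyMeasurable]
  congr 1
  refine lintegral_congr fun s => ?_
  simp only [Pi.mul_apply, measureReal_def]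
  rw [ENNReal.ofReal_mul ENNReal.toReal_nonneg, ENNReal.ofReal_toReal (measure_ne_top _ _),
    mul_comm]

lemma softThreshold_le_iff {τ b : ℝ} (hτ : 0 ≤ τ) (z : ℝ) :
    Real.sign z * max (|z| - τ) 0 ≤ b ↔ z ≤ b + if 0 ≤ b then τ else -τ := by
  rcases lt_trichotomy z 0 with hz | rfl | hz
  · rw [Real.sign_of_neg hz, abs_of_neg hz]
    split_ifs <;> grind
  · simp only [Real.sign_zero, zero_mul]
    split_ifs <;> grind
  · rw [Real.sign_of_pos hz, abs_of_pos hz]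
    split_ifs <;> grind

lemma measurable_softF (σ ξ η : ℝ) : Measurable (softF σ ξ η) := by
  unfold softF
  exact (Real.measurable_sign.comp measurable_fst).mul (by fun_prop)

lemma softF_slice_le {σ ξ η α θ x s : ℝ} (hσ : 0 < σ) (hξ : 0 < ξ) (hη : 0 < η) (hα : 0 < α)
    (hs : 0 ≤ s) :
    (fun z => (z, s)) ⁻¹' {p : ℝ × ℝ | σ⁻¹ * α * (softF σ ξ η p - θ) ≤ x} =
      Iic (θ + σ * x / α + if 0 ≤ x / α + θ / σ then σ * s * ξ * η else -(σ * s * ξ * η)) := by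
  have hscale : ∀ t, σ⁻¹ * α * (t - θ) ≤ x ↔ t ≤ θ + σ * x / α := fun t => by
    rw [show σ⁻¹ * α * (t - θ) = (t - θ) / (σ / α) by field_simp, div_le_iff₀ (by positivity),
      sub_le_iff_le_add', mul_div_left_comm, mul_div_assoc]
  have hsign : 0 ≤ θ + σ * x / α ↔ 0 ≤ x / α + θ / σ := by
    rw [show θ + σ * x / α = σ * (x / α + θ / σ) by field_simp; ring]
    exact mul_nonneg_iff_of_pos_left hσ
  ext z
  simp only [mem_preimage, mem_ofPred_eq, mem_Iic, softF, hscale]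
  simp only [softThreshold_le_iff (by positivity : 0 ≤ σ * s * ξ * η), hsign]

theorem stmt_13_general (n k : ℕ) (hkn : k < n) (θ σ ξ η α : ℝ)
    (hσ : 0 < σ) (hξ : 0 < ξ) (hη : 0 < η) (hα : 0 < α) (x : ℝ) :
    (jointMeas n (n - k) ξ θ σ
        {p : ℝ × ℝ | σ⁻¹ * α * (softF σ ξ η p - θ) ≤ x}).toReal =
      (∫ s in Ioi (0 : ℝ),
          Phi (Real.sqrt n * x / (α * ξ) + Real.sqrt n * s * η) * rho (n - k) s) *
          (if 0 ≤ x / α + θ / σ then 1 else 0)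
        + (∫ s in Ioi (0 : ℝ),
            Phi (Real.sqrt n * x / (α * ξ) - Real.sqrt n * s * η) * rho (n - k) s) *
          (if x / α + θ / σ < 0 then 1 else 0) := by
  have hn : (0 : ℝ) < n := by exact_mod_cast (by omega : 0 < n)
  have hv : (σ ^ 2 * ξ ^ 2 / n).toNNReal ≠ 0 := (Real.toNNReal_pos.2 (by positivity)).ne'
  have hsd : Real.sqrt (σ ^ 2 * ξ ^ 2 / n).toNNReal = σ * ξ / Real.sqrt n := by
    rw [Real.coe_toNNReal _ (by positivity), Real.sqrt_div' _ (Nat.cast_nonneg n),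
      Real.sqrt_mul' _ (sq_nonneg ξ), Real.sqrt_sq hσ.le, Real.sqrt_sq hξ.le]
  set E := {p : ℝ × ℝ | σ⁻¹ * α * (softF σ ξ η p - θ) ≤ x}
  have hA : MeasurableSet E :=
    measurableSet_le (((measurable_softF σ ξ η).sub_const θ).const_mul _) measurable_const
  have hslice : ∀ s ∈ Ioi (0 : ℝ),
      (gaussianReal θ (σ ^ 2 * ξ ^ 2 / n).toNNReal).real ((fun z => (z, s)) ⁻¹' E) =
        Phi (Real.sqrt n * x / (α * ξ) +
          if 0 ≤ x / α + θ / σ then Real.sqrt n * s * η else -(Real.sqrt n * s * η)) := by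
    intro s hs
    rw [softF_slice_le hσ hξ hη hα (le_of_lt hs), ← cdf_eq_real, cdf_gaussianReal θ hv, hsd]
    congr 1
    split_ifs <;> field_simp <;> ring
  rw [jointMeas, measureReal_prod_withDensity _ _ (measurable_rho _) (rho_nonneg _) hA,
    ← setIntegral_eq_integral_of_forall_compl_eq_zero (s := Ioi 0) fun s hs => by
      rw [rho_of_nonpos _ (not_lt.1 hs), mul_zero]]
  by_cases hc : 0 ≤ x / α + θ / σ
  · simp only [hc, not_lt.2 hc, if_true, if_false, mul_one, mul_zero, add_zero]
    exact setIntegral_congr_fun measurableSet_Ioi fun s hs => by rw [hslice s hs, if_pos hc]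
  · simp only [hc, not_le.1 hc, if_true, if_false, mul_one, mul_zero, zero_add]
    exact setIntegral_congr_fun measurableSet_Ioi fun s hs => by
      rw [hslice s hs, if_neg hc, ← sub_eq_add_neg]

/-- finite-sample cdf of the scaled and centered feasible
soft-thresholding estimator. -/
theorem stmt_13 (n k : ℕ) (hk : 1 ≤ k) (hkn : k < n) (θ σ ξ η α : ℝ)
    (hσ : 0 < σ) (hξ : 0 < ξ) (hη : 0 < η) (hα : 0 < α) (x : ℝ) :
    (jointMeas n (n - k) ξ θ σ
        {p : ℝ × ℝ | σ⁻¹ * α * (softF σ ξ η p - θ) ≤ x}).toReal =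
      (∫ s in Ioi (0 : ℝ),
          Phi (Real.sqrt n * x / (α * ξ) + Real.sqrt n * s * η) * rho (n - k) s) *
          (if 0 ≤ x / α + θ / σ then 1 else 0)
        + (∫ s in Ioi (0 : ℝ),
            Phi (Real.sqrt n * x / (α * ξ) - Real.sqrt n * s * η) * rho (n - k) s) *
          (if x / α + θ / σ < 0 then 1 else 0) :=
  stmt_13_general n k hkn θ σ ξ η α hσ hξ hη hα x
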